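/- Let (X,ρ) and (X',ρ') be separable metric spaces, q ∈ ℝ, μ a Borel probability measure on X, ν a Borel probability measure on X', and h, h' Hausdorff functions. Let E ⊆ X and F ⊆ X', and assume that either W^{q,h}_μ(E) = H^{q,h}_μ(E) or W^{q,h'}_ν(F) = H^{q,h'}_ν(F). Then H^{q,h×h'}_{μ×ν}(E×F) ≥ H^{q,h}_μ(E) · H^{q,h'}_ν(F), where the product space X×X' carries the metric max(ρ,ρ') and H^{q,h×h'}_{μ×ν} is constructed from the premeasure ξ_{h×h'} on X×X'. -/

import Mathlib

/-!
Take a centered `δ`-cover of `A × B` by product balls `B(a i, r i) × B(b i, r i)`. For each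
`x ∈ A`, the balls `B(b i, r i)` with `x ∈ B(a i, r i)` form a centered `δ`-cover of `B`, so
their total `ν`-weight is at least any `t < H_δ(B)`. Hence the weights
`min (ν-weight i / t) 1` turn the balls `B(a i, r i)` into a weighted `δ`-cover of `A`, and
`t · W_δ(A) ≤ ∑ μ-weight i · ν-weight i`. The measure of a product ball is the product of the
measures of its factors and its diameter dominates theirs, so the right side is at most the
`μ × ν`-weight of the cover.
So `W_δ(A) H_δ(B) ≤ H_δ(A × B)` and, symmetrically, `H_δ(A) W_δ(B) ≤ H_δ(A × B)`; these pass to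
the suprema over `δ` and over subsets, and the hypothesis `W = H` on one factor concludes.
-/

open Metric MeasureTheory Set Filter TopologicalSpace
open scoped ENNReal NNReal Classical

noncomputable section

/-- `x ^ q` for extended nonnegative reals, with the paper's convention
`0 ^ q = ∞` for `q ≤ 0`. -/
def epow (x : ℝ≥0∞) (q : ℝ) : ℝ≥0∞ := if x = 0 ∧ q ≤ 0 then ∞ else x ^ q

variable {X X' : Type*}

section Defs

variable [MetricSpace X] [MetricSpace X']

/-- A premeasure on a metric space: an increasing `[0,∞]`-valued function on the family of
closed balls, vanishing on the empty set. -/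
def IsPremeasure (ξ : Set X → ℝ≥0∞) : Prop :=
  ξ ∅ = 0 ∧ ∀ (x : X) (r : ℝ) (x' : X) (r' : ℝ),
    closedBall x r ⊆ closedBall x' r' → ξ (closedBall x r) ≤ ξ (closedBall x' r')

/-- The doubling ("blanketed") condition defining the class `Φ_D` of premeasures:
`ξ(B(x,2r)) ≤ K ξ(B(x,r))` for some constant `K > 1`, all `x` and all `0 < r ≤ 1`. -/
def PremeasureBlanketed (ξ : Set X → ℝ≥0∞) : Prop :=
  ∃ K : ℝ≥0, 1 < K ∧ ∀ (x : X) (r : ℝ), 0 < r → r ≤ 1 →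
    ξ (closedBall x (2 * r)) ≤ (K : ℝ≥0∞) * ξ (closedBall x r)

variable [MeasurableSpace X] [MeasurableSpace X']

/-- The support of a Borel measure on a metric space. -/
def measSupport (μ : Measure X) : Set X := {x : X | ∀ r : ℝ, 0 < r → 0 < μ (ball x r)}

/-- A blanketed (doubling) measure: for some `a > 1`,
`limsup_{r → 0⁺} sup_{x ∈ supp μ} μ(B(x,ar)) / μ(B(x,r)) < ∞`. -/
def MeasureBlanketed (μ : Measure X) : Prop :=
  ∃ a : ℝ, 1 < a ∧
    limsup (fun r : ℝ => ⨆ x ∈ measSupport μ,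
      μ (closedBall x (a * r)) / μ (closedBall x r)) (nhdsWithin 0 (Ioi 0)) < ∞

/-- The quantity `μ(B)^q ξ(B)` attached to a ball `B`. -/
def ballWeight (μ : Measure X) (q : ℝ) (ξ : Set X → ℝ≥0∞) (B : Set X) : ℝ≥0∞ :=
  epow (μ B) q * ξ B

/-- A centered `δ`-cover of `E`: countably many closed balls centered in `E`, of diameters
at most `2δ`, covering `E`. -/
def IsCenteredCover (E : Set X) (δ : ℝ) (c : ℕ → X) (r : ℕ → ℝ) : Prop :=
  (∀ i, c i ∈ E) ∧ (∀ i, diam (closedBall (c i) (r i)) ≤ 2 * δ) ∧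
    E ⊆ ⋃ i, closedBall (c i) (r i)

/-- The pre-Hausdorff quantity `H^{q,ξ}_{μ,δ}(E)`. -/
def Hd (μ : Measure X) (q : ℝ) (ξ : Set X → ℝ≥0∞) (δ : ℝ) (E : Set X) : ℝ≥0∞ :=
  if E = ∅ then 0 else
    ⨅ (c : ℕ → X) (r : ℕ → ℝ) (_ : IsCenteredCover E δ c r),
      ∑' i, ballWeight μ q ξ (closedBall (c i) (r i))

/-- `H^{q,ξ}_{μ,0}(E) = sup_{δ > 0} H^{q,ξ}_{μ,δ}(E)`. -/
def H0 (μ : Measure X) (q : ℝ) (ξ : Set X → ℝ≥0∞) (E : Set X) : ℝ≥0∞ :=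
  ⨆ (δ : ℝ) (_ : 0 < δ), Hd μ q ξ δ E

/-- The generalized Hausdorff measure `H^{q,ξ}_μ(E) = sup_{F ⊆ E} H^{q,ξ}_{μ,0}(F)`. -/
def HM (μ : Measure X) (q : ℝ) (ξ : Set X → ℝ≥0∞) (E : Set X) : ℝ≥0∞ :=
  ⨆ (F : Set X) (_ : F ⊆ E), H0 μ q ξ F

/-- A weighted and centered `δ`-cover of `E`: countably many pairs `(w i, B i)` of nonnegative
weights and closed balls centered in `E` of diameters at most `2δ`, with
`Σ {w i : x ∈ B i} ≥ 1` for every `x ∈ E`. -/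
def IsWeightedCover (E : Set X) (δ : ℝ) (w : ℕ → ℝ≥0) (c : ℕ → X) (r : ℕ → ℝ) : Prop :=
  (∀ i, c i ∈ E) ∧ (∀ i, diam (closedBall (c i) (r i)) ≤ 2 * δ) ∧
    ∀ x ∈ E, 1 ≤ ∑' i, (if x ∈ closedBall (c i) (r i) then (w i : ℝ≥0∞) else 0)

/-- The pre-weighted-Hausdorff quantity `W^{q,ξ}_{μ,δ}(E)`. -/
def Wd (μ : Measure X) (q : ℝ) (ξ : Set X → ℝ≥0∞) (δ : ℝ) (E : Set X) : ℝ≥0∞ :=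
  if E = ∅ then 0 else
    ⨅ (w : ℕ → ℝ≥0) (c : ℕ → X) (r : ℕ → ℝ) (_ : IsWeightedCover E δ w c r),
      ∑' i, (w i : ℝ≥0∞) * ballWeight μ q ξ (closedBall (c i) (r i))

/-- `W^{q,ξ}_{μ,0}(E) = sup_{δ > 0} W^{q,ξ}_{μ,δ}(E)`. -/
def W0 (μ : Measure X) (q : ℝ) (ξ : Set X → ℝ≥0∞) (E : Set X) : ℝ≥0∞ :=
  ⨆ (δ : ℝ) (_ : 0 < δ), Wd μ q ξ δ E

/-- The weighted generalized Hausdorff measure `W^{q,ξ}_μ(E) = sup_{F ⊆ E} W^{q,ξ}_{μ,0}(F)`. -/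
def WM (μ : Measure X) (q : ℝ) (ξ : Set X → ℝ≥0∞) (E : Set X) : ℝ≥0∞ :=
  ⨆ (F : Set X) (_ : F ⊆ E), W0 μ q ξ F

/-- Hypothesis (H) for `(X, ξ, μ)`: for every `ε > 0`, `X` can be covered by countably many
closed balls of diameters `< ε` on which `μ(B)^q ξ(B)` is finite. -/
def HypH (μ : Measure X) (q : ℝ) (ξ : Set X → ℝ≥0∞) : Prop :=
  ∀ ε : ℝ, 0 < ε → ∃ (c : ℕ → X) (r : ℕ → ℝ),
    (univ : Set X) ⊆ (⋃ i, closedBall (c i) (r i)) ∧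
    (∀ i, diam (closedBall (c i) (r i)) < ε) ∧
    ∀ i, ballWeight μ q ξ (closedBall (c i) (r i)) < ∞

/-- The product premeasure `ξ₀(B × B') = ξ(B) ξ'(B')` on the product space (whose closed balls
are exactly the products `B(x,r) × B(x',r)`), with the convention `0 ⬝ ∞ = ∞ ⬝ 0 = 0`. -/
def prodPre (ξ : Set X → ℝ≥0∞) (ξ' : Set X' → ℝ≥0∞) : Set (X × X') → ℝ≥0∞ :=
  fun S => ξ (Prod.fst '' S) * ξ' (Prod.snd '' S)

/-- Two sets are (positively) separated: `inf {ρ(x,y) : x ∈ E, y ∈ F} > 0`. -/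
def SepSets (E F : Set X) : Prop := 0 < ⨅ x ∈ E, ⨅ y ∈ F, edist x y

/-- The upper `(q,ξ)`-density of `ν` at `x` with respect to `μ`:
`limsup_{r → 0⁺} ν(B(x,r)) / (μ(B(x,r))^q ξ(B(x,r)))`. -/
def upperDensity (μ : Measure X) (q : ℝ) (ξ : Set X → ℝ≥0∞) (x : X) (ν : Measure X) : ℝ≥0∞ :=
  limsup (fun r : ℝ => ν (closedBall x r) / ballWeight μ q ξ (closedBall x r))
    (nhdsWithin 0 (Ioi 0))

/-- A Hausdorff function: right continuous, monotone increasing `h : [0,∞] → [0,∞]` with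
`h(0) = 0` and `h(r) > 0` for `r > 0`. -/
def IsHausdorffFunction (h : ℝ≥0∞ → ℝ≥0∞) : Prop :=
  Monotone h ∧ h 0 = 0 ∧ (∀ r : ℝ≥0∞, 0 < r → 0 < h r) ∧
    ∀ r : ℝ≥0∞, ContinuousWithinAt h (Ici r) r

/-- The premeasure `ξ_h` induced by a Hausdorff function: `ξ_h(B) = h(diam B)` for `B ≠ ∅`,
`ξ_h(∅) = 0`. -/
def hausPre (h : ℝ≥0∞ → ℝ≥0∞) : Set X → ℝ≥0∞ :=
  fun B => if B = ∅ then 0 else h (EMetric.diam B)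

end Defs

lemma ENNReal.one_le_tsum_min_div_one {s : ℕ → ℝ≥0∞} {t : ℝ≥0∞} (ht₀ : t ≠ 0) (ht : t ≠ ∞)
    (hs : t ≤ ∑' i, s i) : 1 ≤ ∑' i, min (s i / t) 1 := by
  have one_le_div : ∀ {x : ℝ≥0∞}, t ≤ x → 1 ≤ x / t := fun hx =>
    (ENNReal.le_div_iff_mul_le (.inl ht₀) (.inl ht)).2 (by rwa [one_mul])
  by_cases hlarge : ∃ i, t ≤ s i
  · obtain ⟨i, hi⟩ := hlarge
    calc (1 : ℝ≥0∞) = min (s i / t) 1 := (min_eq_right (one_le_div hi)).symm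
      _ ≤ _ := ENNReal.le_tsum i
  simp only [not_exists, not_le] at hlarge
  calc (1 : ℝ≥0∞) ≤ (∑' i, s i) / t := one_le_div hs
    _ = ∑' i, s i / t := by simp only [div_eq_mul_inv, ENNReal.tsum_mul_right]
    _ = ∑' i, min (s i / t) 1 := tsum_congr fun i =>
      (min_eq_left ((ENNReal.div_le_iff ht₀ ht).2 (by rw [one_mul]; exact (hlarge i).le))).symm

lemma ENNReal.biSup_mul_biSup_le {ι κ : Type*} {p : ι → Prop} {p' : κ → Prop}
    {f : ι → ℝ≥0∞} {g : κ → ℝ≥0∞} {c : ℝ≥0∞} (H : ∀ i, p i → ∀ j, p' j → f i * g j ≤ c) :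
    (⨆ (i) (_ : p i), f i) * (⨆ (j) (_ : p' j), g j) ≤ c := by
  simp_rw [ENNReal.iSup_mul, ENNReal.mul_iSup]
  exact iSup₂_le fun i hi => iSup₂_le fun j hj => H i hi j hj

lemma biSup_pos_mul_biSup_pos_le {f g k : ℝ → ℝ≥0∞} (hf : Antitone f) (hg : Antitone g)
    (H : ∀ δ, 0 < δ → f δ * g δ ≤ k δ) :
    (⨆ (δ : ℝ) (_ : 0 < δ), f δ) * (⨆ (δ : ℝ) (_ : 0 < δ), g δ) ≤ ⨆ (δ : ℝ) (_ : 0 < δ), k δ :=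
  ENNReal.biSup_mul_biSup_le fun δ₁ hδ₁ δ₂ hδ₂ =>
    calc f δ₁ * g δ₂ ≤ f (min δ₁ δ₂) * g (min δ₁ δ₂) :=
          mul_le_mul' (hf (min_le_left _ _)) (hg (min_le_right _ _))
      _ ≤ ⨆ (δ : ℝ) (_ : 0 < δ), k δ := le_iSup₂_of_le _ (lt_min hδ₁ hδ₂) (H _ (lt_min hδ₁ hδ₂))

lemma biSup_subset_mul_biSup_subset_le {f : Set X → ℝ≥0∞} {g : Set X' → ℝ≥0∞}
    {k : Set (X × X') → ℝ≥0∞} (H : ∀ A B, f A * g B ≤ k (A ×ˢ B)) (E : Set X) (F : Set X') :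
    (⨆ (A : Set X) (_ : A ⊆ E), f A) * (⨆ (B : Set X') (_ : B ⊆ F), g B) ≤
      ⨆ (G : Set (X × X')) (_ : G ⊆ E ×ˢ F), k G :=
  ENNReal.biSup_mul_biSup_le fun A hA B hB => le_iSup₂_of_le _ (prod_mono hA hB) (H A B)

lemma epow_zero_of_nonpos {q : ℝ} (hq : q ≤ 0) : epow 0 q = ∞ := if_pos ⟨rfl, hq⟩

lemma epow_mul {a b : ℝ≥0∞} (ha : a ≠ ∞) (hb : b ≠ ∞) (q : ℝ) :
    epow (a * b) q = epow a q * epow b q := by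
  rcases le_or_gt q 0 with hq | hq
  · have hpos : ∀ {x : ℝ≥0∞}, x ≠ ∞ → epow x q ≠ 0 := fun hx => by
      unfold epow; split_ifs <;> simp [ENNReal.rpow_eq_zero_iff, *]
    rcases eq_or_ne a 0 with rfl | ha0
    · rw [zero_mul, epow_zero_of_nonpos hq, ENNReal.top_mul (hpos hb)]
    rcases eq_or_ne b 0 with rfl | hb0
    · rw [mul_zero, epow_zero_of_nonpos hq, ENNReal.mul_top (hpos ha)]
    simp [epow, ha0, hb0, ENNReal.mul_rpow_of_ne_zero ha0 hb0]
  · simp [epow, hq.not_ge, ENNReal.mul_rpow_of_ne_top ha hb]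

lemma ballWeight_empty [MeasurableSpace X] (μ : Measure X) (q : ℝ) {ξ : Set X → ℝ≥0∞}
    (hξ : ξ ∅ = 0) : ballWeight μ q ξ ∅ = 0 := by
  simp [ballWeight, hξ]

section Covers

variable [MetricSpace X] [MetricSpace X']

lemma ediam_closedBall_fst_le (p : X × X') (r : ℝ) :
    ediam (closedBall p.1 r) ≤ ediam (closedBall p r) := by
  rcases lt_or_ge r 0 with hr | hr
  · simp [closedBall_eq_empty.mpr hr]
  rw [← closedBall_prod_same]
  refine ediam_le fun x hx y hy => ?_
  calc edist x y ≤ edist (x, p.2) (y, p.2) := by simp [Prod.edist_eq]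
    _ ≤ _ := edist_le_ediam_of_mem (mk_mem_prod hx (mem_closedBall_self hr))
      (mk_mem_prod hy (mem_closedBall_self hr))

lemma ediam_closedBall_snd_le (p : X × X') (r : ℝ) :
    ediam (closedBall p.2 r) ≤ ediam (closedBall p r) := by
  rcases lt_or_ge r 0 with hr | hr
  · simp [closedBall_eq_empty.mpr hr]
  rw [← closedBall_prod_same]
  refine ediam_le fun x hx y hy => ?_
  calc edist x y ≤ edist (p.1, x) (p.1, y) := by simp [Prod.edist_eq]
    _ ≤ _ := edist_le_ediam_of_mem (mk_mem_prod (mem_closedBall_self hr) hx)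
      (mk_mem_prod (mem_closedBall_self hr) hy)

lemma diam_closedBall_fst_le (p : X × X') (r : ℝ) :
    diam (closedBall p.1 r) ≤ diam (closedBall p r) :=
  ENNReal.toReal_mono isBounded_closedBall.ediam_ne_top (ediam_closedBall_fst_le p r)

lemma diam_closedBall_snd_le (p : X × X') (r : ℝ) :
    diam (closedBall p.2 r) ≤ diam (closedBall p r) :=
  ENNReal.toReal_mono isBounded_closedBall.ediam_ne_top (ediam_closedBall_snd_le p r)

variable {δ δ' : ℝ} {E : Set X}

lemma IsCenteredCover.mono {c : ℕ → X} {r : ℕ → ℝ} (hc : IsCenteredCover E δ c r) (hδ : δ ≤ δ') :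
    IsCenteredCover E δ' c r :=
  ⟨hc.1, fun i => (hc.2.1 i).trans (by linarith), hc.2.2⟩

lemma IsWeightedCover.mono {w : ℕ → ℝ≥0} {c : ℕ → X} {r : ℕ → ℝ}
    (hc : IsWeightedCover E δ w c r) (hδ : δ ≤ δ') : IsWeightedCover E δ' w c r :=
  ⟨hc.1, fun i => (hc.2.1 i).trans (by linarith), hc.2.2⟩

variable [MeasurableSpace X] [MeasurableSpace X']

lemma ballWeight_mul_le_ballWeight_prod (μ : Measure X) [IsFiniteMeasure μ]
    (ν : Measure X') [IsFiniteMeasure ν] (q : ℝ) {h h' : ℝ≥0∞ → ℝ≥0∞}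
    (hh : Monotone h) (hh' : Monotone h') (p : X × X') (r : ℝ) :
    ballWeight μ q (hausPre h) (closedBall p.1 r) * ballWeight ν q (hausPre h') (closedBall p.2 r)
      ≤ ballWeight (μ.prod ν) q (hausPre fun s => h s * h' s) (closedBall p r) := by
  rcases lt_or_ge r 0 with hr | hr
  · simp [closedBall_eq_empty.mpr hr, ballWeight_empty, hausPre]
  have hne₁ : closedBall p.1 r ≠ ∅ := (nonempty_closedBall.mpr hr).ne_empty
  have hne₂ : closedBall p.2 r ≠ ∅ := (nonempty_closedBall.mpr hr).ne_empty
  have hne : closedBall p r ≠ ∅ := (nonempty_closedBall.mpr hr).ne_empty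
  simp only [ballWeight, hausPre, if_neg hne₁, if_neg hne₂, if_neg hne]
  rw [← closedBall_prod_same, Measure.prod_prod, epow_mul (measure_ne_top _ _) (measure_ne_top _ _),
    closedBall_prod_same, mul_mul_mul_comm]
  gcongr
  exacts [hh (ediam_closedBall_fst_le p r), hh' (ediam_closedBall_snd_le p r)]

variable {μ : Measure X} {q : ℝ} {ξ : Set X → ℝ≥0∞}

lemma IsCenteredCover.Hd_le_tsum {c : ℕ → X} {r : ℕ → ℝ} (hc : IsCenteredCover E δ c r) :
    Hd μ q ξ δ E ≤ ∑' i, ballWeight μ q ξ (closedBall (c i) (r i)) := by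
  unfold Hd
  split_ifs
  exacts [zero_le, iInf₂_le_of_le c r (iInf_le _ hc)]

lemma IsWeightedCover.Wd_le_tsum {w : ℕ → ℝ≥0} {c : ℕ → X} {r : ℕ → ℝ}
    (hc : IsWeightedCover E δ w c r) :
    Wd μ q ξ δ E ≤ ∑' i, (w i : ℝ≥0∞) * ballWeight μ q ξ (closedBall (c i) (r i)) := by
  unfold Wd
  split_ifs
  exacts [zero_le, iInf₂_le_of_le w c (iInf₂_le r hc)]

lemma Hd_antitone (μ : Measure X) (q : ℝ) (ξ : Set X → ℝ≥0∞) (E : Set X) :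
    Antitone fun δ => Hd μ q ξ δ E := fun δ δ' hδ => by
  unfold Hd
  split_ifs
  exacts [le_rfl, iInf₂_mono fun c r => iInf_mono' fun hc => ⟨hc.mono hδ, le_rfl⟩]

lemma Wd_antitone (μ : Measure X) (q : ℝ) (ξ : Set X → ℝ≥0∞) (E : Set X) :
    Antitone fun δ => Wd μ q ξ δ E := fun δ δ' hδ => by
  unfold Wd
  split_ifs
  exacts [le_rfl, iInf₂_mono fun w c => iInf₂_mono' fun r hc => ⟨r, hc.mono hδ, le_rfl⟩]

end Covers

section Rectangles

variable [MetricSpace X] [MetricSpace X']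

structure IsRectangleCover (A : Set X) (B : Set X') (δ : ℝ) (a : ℕ → X) (b : ℕ → X')
    (r : ℕ → ℝ) : Prop where
  fst_mem : ∀ i, a i ∈ A
  snd_mem : ∀ i, b i ∈ B
  diam_fst_le : ∀ i, diam (closedBall (a i) (r i)) ≤ 2 * δ
  diam_snd_le : ∀ i, diam (closedBall (b i) (r i)) ≤ 2 * δ
  cover : ∀ x ∈ A, ∀ y ∈ B, ∃ i, x ∈ closedBall (a i) (r i) ∧ y ∈ closedBall (b i) (r i)

variable {A : Set X} {B : Set X'} {δ : ℝ} {a : ℕ → X} {b : ℕ → X'} {r : ℕ → ℝ}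

lemma IsRectangleCover.swap (hc : IsRectangleCover A B δ a b r) :
    IsRectangleCover B A δ b a r where
  fst_mem := hc.snd_mem
  snd_mem := hc.fst_mem
  diam_fst_le := hc.diam_snd_le
  diam_snd_le := hc.diam_fst_le
  cover y hy x hx := (hc.cover x hx y hy).imp fun _ => And.symm

lemma IsCenteredCover.isRectangleCover {c : ℕ → X × X'} (hc : IsCenteredCover (A ×ˢ B) δ c r) :
    IsRectangleCover A B δ (fun i => (c i).1) (fun i => (c i).2) r where
  fst_mem i := (hc.1 i).1
  snd_mem i := (hc.1 i).2
  diam_fst_le i := (diam_closedBall_fst_le (c i) (r i)).trans (hc.2.1 i)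
  diam_snd_le i := (diam_closedBall_snd_le (c i) (r i)).trans (hc.2.1 i)
  cover x hx y hy := by
    obtain ⟨i, hi⟩ := mem_iUnion.1 (hc.2.2 (mk_mem_prod hx hy))
    exact ⟨i, by rwa [← closedBall_prod_same] at hi⟩

variable [MeasurableSpace X'] {ν : Measure X'} {q : ℝ} {ξ' : Set X' → ℝ≥0∞}

lemma IsRectangleCover.Hd_le_tsum_slice (hc : IsRectangleCover A B δ a b r) (hξ' : ξ' ∅ = 0)
    (hδ : 0 ≤ δ) {x : X} (hx : x ∈ A) :
    Hd ν q ξ' δ B ≤ ∑' i, if x ∈ closedBall (a i) (r i)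
      then ballWeight ν q ξ' (closedBall (b i) (r i)) else 0 := by
  -- the balls whose first factor misses `x` are dropped by giving them radius `-1`
  set r' : ℕ → ℝ := fun i => if x ∈ closedBall (a i) (r i) then r i else -1
  have hball : ∀ i, closedBall (b i) (r' i) =
      if x ∈ closedBall (a i) (r i) then closedBall (b i) (r i) else ∅ := fun i => by
    by_cases hi : x ∈ closedBall (a i) (r i) <;> simp only [r', hi, if_true, if_false]
    exact closedBall_eq_empty.2 (by norm_num)
  have hr' : IsCenteredCover B δ b r' := by
    refine ⟨hc.snd_mem, fun i => ?_, fun y hy => ?_⟩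
    · rw [hball]
      split_ifs
      exacts [hc.diam_snd_le i, by simpa using hδ]
    · obtain ⟨i, hxi, hyi⟩ := hc.cover x hx y hy
      exact mem_iUnion.2 ⟨i, by rwa [hball, if_pos hxi]⟩
  refine hr'.Hd_le_tsum.trans_eq (tsum_congr fun i => ?_)
  rw [hball]
  split_ifs
  exacts [rfl, ballWeight_empty ν q hξ']

variable [MeasurableSpace X] {μ : Measure X} {ξ : Set X → ℝ≥0∞}

lemma IsRectangleCover.Wd_mul_Hd_le (hc : IsRectangleCover A B δ a b r) (hξ' : ξ' ∅ = 0)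
    (hδ : 0 ≤ δ) :
    Wd μ q ξ δ A * Hd ν q ξ' δ B ≤ ∑' i, ballWeight μ q ξ (closedBall (a i) (r i)) *
      ballWeight ν q ξ' (closedBall (b i) (r i)) := by
  set s : ℕ → ℝ≥0∞ := fun i => ballWeight ν q ξ' (closedBall (b i) (r i))
  refine ENNReal.mul_le_of_forall_lt fun W hW t ht => ?_
  rcases eq_or_ne t 0 with rfl | ht₀
  · simp
  let w : ℕ → ℝ≥0 := fun i => (min (s i / t) 1).toNNReal
  have hw : ∀ i, (w i : ℝ≥0∞) = min (s i / t) 1 := fun i =>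
    ENNReal.coe_toNNReal ((min_le_right _ _).trans_lt ENNReal.one_lt_top).ne
  have hwt : ∀ i, (w i : ℝ≥0∞) * t ≤ s i := fun i => by
    rw [hw]
    calc min (s i / t) 1 * t ≤ s i / t * t := by gcongr; exact min_le_left _ _
      _ = s i := ENNReal.div_mul_cancel ht₀ ht.ne_top
  have hwc : IsWeightedCover A δ w a r := by
    refine ⟨hc.fst_mem, hc.diam_fst_le, fun x hx => ?_⟩
    calc (1 : ℝ≥0∞)
        ≤ ∑' i, min ((if x ∈ closedBall (a i) (r i) then s i else 0) / t) 1 :=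
          ENNReal.one_le_tsum_min_div_one ht₀ ht.ne_top
            (ht.trans_le (hc.Hd_le_tsum_slice hξ' hδ hx)).le
      _ = ∑' i, if x ∈ closedBall (a i) (r i) then (w i : ℝ≥0∞) else 0 :=
          tsum_congr fun i => by split_ifs <;> simp [hw]
  calc W * t ≤ Wd μ q ξ δ A * t := by gcongr
    _ ≤ (∑' i, (w i : ℝ≥0∞) * ballWeight μ q ξ (closedBall (a i) (r i))) * t := by
      gcongr
      exact hwc.Wd_le_tsum
    _ = ∑' i, ballWeight μ q ξ (closedBall (a i) (r i)) * (w i * t) := by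
      rw [← ENNReal.tsum_mul_right]
      exact tsum_congr fun i => by ring
    _ ≤ _ := ENNReal.tsum_le_tsum fun i => by gcongr; exact hwt i

end Rectangles

section Product

variable [MetricSpace X] [MeasurableSpace X] [MetricSpace X'] [MeasurableSpace X']
  (μ : Measure X) [IsFiniteMeasure μ] (ν : Measure X') [IsFiniteMeasure ν] (q : ℝ)
  {h h' : ℝ≥0∞ → ℝ≥0∞} {δ : ℝ}

lemma le_Hd_prod_of_isRectangleCover {A : Set X} {B : Set X'} {c : ℝ≥0∞} (hh : Monotone h)
    (hh' : Monotone h') (hAB : (A ×ˢ B).Nonempty)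
    (H : ∀ a b r, IsRectangleCover A B δ a b r → c ≤ ∑' i,
      ballWeight μ q (hausPre h) (closedBall (a i) (r i)) *
        ballWeight ν q (hausPre h') (closedBall (b i) (r i))) :
    c ≤ Hd (μ.prod ν) q (hausPre fun s => h s * h' s) δ (A ×ˢ B) := by
  rw [Hd, if_neg hAB.ne_empty]
  exact le_iInf₂ fun p r => le_iInf fun hp => (H _ _ _ hp.isRectangleCover).trans <|
    ENNReal.tsum_le_tsum fun i => ballWeight_mul_le_ballWeight_prod μ ν q hh hh' (p i) (r i)

lemma Wd_mul_Hd_le_Hd_prod (hh : Monotone h) (hh' : Monotone h') (hδ : 0 ≤ δ)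
    (A : Set X) (B : Set X') :
    Wd μ q (hausPre h) δ A * Hd ν q (hausPre h') δ B ≤
      Hd (μ.prod ν) q (hausPre fun s => h s * h' s) δ (A ×ˢ B) := by
  rcases (A ×ˢ B).eq_empty_or_nonempty with hAB | hAB
  · rcases prod_eq_empty_iff.1 hAB with rfl | rfl <;> simp [Wd, Hd]
  exact le_Hd_prod_of_isRectangleCover μ ν q hh hh' hAB fun a b r hc =>
    hc.Wd_mul_Hd_le (by simp [hausPre]) hδ

lemma Hd_mul_Wd_le_Hd_prod (hh : Monotone h) (hh' : Monotone h') (hδ : 0 ≤ δ)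
    (A : Set X) (B : Set X') :
    Hd μ q (hausPre h) δ A * Wd ν q (hausPre h') δ B ≤
      Hd (μ.prod ν) q (hausPre fun s => h s * h' s) δ (A ×ˢ B) := by
  rcases (A ×ˢ B).eq_empty_or_nonempty with hAB | hAB
  · rcases prod_eq_empty_iff.1 hAB with rfl | rfl <;> simp [Wd, Hd]
  refine le_Hd_prod_of_isRectangleCover μ ν q hh hh' hAB fun a b r hc => ?_
  simpa only [mul_comm] using hc.swap.Wd_mul_Hd_le (μ := ν) (ν := μ) (by simp [hausPre]) hδ

lemma WM_mul_HM_le_HM_prod (hh : Monotone h) (hh' : Monotone h') (E : Set X) (F : Set X') :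
    WM μ q (hausPre h) E * HM ν q (hausPre h') F ≤
      HM (μ.prod ν) q (hausPre fun s => h s * h' s) (E ×ˢ F) :=
  biSup_subset_mul_biSup_subset_le (fun A B => biSup_pos_mul_biSup_pos_le (Wd_antitone _ _ _ A)
    (Hd_antitone _ _ _ B) fun _ hδ => Wd_mul_Hd_le_Hd_prod μ ν q hh hh' hδ.le A B) E F

lemma HM_mul_WM_le_HM_prod (hh : Monotone h) (hh' : Monotone h') (E : Set X) (F : Set X') :
    HM μ q (hausPre h) E * WM ν q (hausPre h') F ≤
      HM (μ.prod ν) q (hausPre fun s => h s * h' s) (E ×ˢ F) :=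
  biSup_subset_mul_biSup_subset_le (fun A B => biSup_pos_mul_biSup_pos_le (Hd_antitone _ _ _ A)
    (Wd_antitone _ _ _ B) fun _ hδ => Hd_mul_Wd_le_Hd_prod μ ν q hh hh' hδ.le A B) E F

end Product

section Thms

variable [MetricSpace X] [SeparableSpace X] [MeasurableSpace X] [BorelSpace X]
variable [MetricSpace X'] [SeparableSpace X'] [MeasurableSpace X'] [BorelSpace X']

theorem stmt17 (q : ℝ) (μ : Measure X) [IsProbabilityMeasure μ]
    (ν : Measure X') [IsProbabilityMeasure ν]
    (h h' : ℝ≥0∞ → ℝ≥0∞) (hh : IsHausdorffFunction h) (hh' : IsHausdorffFunction h')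
    (E : Set X) (F : Set X')
    (hreg : WM μ q (hausPre h) E = HM μ q (hausPre h) E ∨
            WM ν q (hausPre h') F = HM ν q (hausPre h') F) :
    HM μ q (hausPre h) E * HM ν q (hausPre h') F ≤
      HM (μ.prod ν) q (hausPre fun r => h r * h' r) (E ×ˢ F) := by
  rcases hreg with hreg | hreg
  · rw [← hreg]
    exact WM_mul_HM_le_HM_prod μ ν q hh.1 hh'.1 E F
  · rw [← hreg]
    exact HM_mul_WM_le_HM_prod μ ν q hh.1 hh'.1 E F

end Thms
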